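/- Let G and H be finite simple graphs such that for every natural number k the number of proper k-colorings of G equals the number of proper k-colorings of H. Then for every natural number k, the number of proper k-colorings of Ĝ equals the number of proper k-colorings of Ĥ, where Ĝ and Ĥ are obtained from G and H respectively by adding a vertex-disjoint path on 4 vertices and joining every original vertex to both endpoints of the path. -/
import Mathlib


open SimpleGraph

/-- The number of proper `k`-colorings of `G` (the chromatic polynomial evaluated at `k`). -/
noncomputable def numColorings {V : Type*} [Fintype V] (G : SimpleGraph V) (k : ℕ) : ℕ :=
  Nat.card (G.Coloring (Fin k))
/-- The graph `Ĝ`: the disjoint union of `G` with a path `P` on 4 vertices (`0-1-2-3`),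
where additionally every vertex of `G` is joined to both endpoints (`0` and `3`) of `P`. -/
def hatGraph {V : Type*} (G : SimpleGraph V) : SimpleGraph (V ⊕ Fin 4) :=
  SimpleGraph.fromRel fun a b =>
    match a, b with
    | Sum.inl u, Sum.inl v => G.Adj u v
    | Sum.inl _, Sum.inr i => i = 0 ∨ i = 3
    | Sum.inr _, Sum.inl _ => False
    | Sum.inr i, Sum.inr j => (i = 0 ∧ j = 1) ∨ (i = 1 ∧ j = 2) ∨ (i = 2 ∧ j = 3)

section aux
variable {V : Type*} {G : SimpleGraph V}

lemma hat_adj_inl_inl {u v : V} : (hatGraph G).Adj (Sum.inl u) (Sum.inl v) ↔ G.Adj u v := by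
  simp only [hatGraph, SimpleGraph.fromRel_adj, ne_eq, Sum.inl.injEq]
  constructor
  · rintro ⟨-, h | h⟩
    · exact h
    · exact h.symm
  · intro h; exact ⟨h.ne, Or.inl h⟩

lemma hat_adj_inl_inr {u : V} {i : Fin 4} (hi : i = 0 ∨ i = 3) :
    (hatGraph G).Adj (Sum.inl u) (Sum.inr i) := by
  simp only [hatGraph, SimpleGraph.fromRel_adj]
  exact ⟨by simp, Or.inl hi⟩

lemma hat_adj_inr_inr {i j : Fin 4}
    (hij : (i = 0 ∧ j = 1) ∨ (i = 1 ∧ j = 2) ∨ (i = 2 ∧ j = 3)) :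
    (hatGraph G).Adj (Sum.inr i) (Sum.inr j) := by
  simp only [hatGraph, SimpleGraph.fromRel_adj, ne_eq, Sum.inr.injEq]
  refine ⟨?_, Or.inl hij⟩
  rcases hij with ⟨h1, h2⟩ | ⟨h1, h2⟩ | ⟨h1, h2⟩ <;> subst h1 <;> subst h2 <;> decide

/-- decomposition equiv -/
def hatEquiv (G : SimpleGraph V) (k : ℕ) :
    (hatGraph G).Coloring (Fin k) ≃
      Σ f : {f : Fin 4 → Fin k // f 0 ≠ f 1 ∧ f 1 ≠ f 2 ∧ f 2 ≠ f 3},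
        G.Coloring {x : Fin k // x ≠ f.1 0 ∧ x ≠ f.1 3} where
  toFun c :=
    ⟨⟨fun i => c (Sum.inr i),
      ⟨c.valid (hat_adj_inr_inr (Or.inl ⟨rfl, rfl⟩)),
       c.valid (hat_adj_inr_inr (Or.inr (Or.inl ⟨rfl, rfl⟩))),
       c.valid (hat_adj_inr_inr (Or.inr (Or.inr ⟨rfl, rfl⟩)))⟩⟩,
     SimpleGraph.Coloring.mk
       (fun v => ⟨c (Sum.inl v),
         c.valid (hat_adj_inl_inr (Or.inl rfl)),
         c.valid (hat_adj_inl_inr (Or.inr rfl))⟩)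
       (fun hadj h => c.valid (hat_adj_inl_inl.2 hadj) (congrArg Subtype.val h))⟩
  invFun p :=
    SimpleGraph.Coloring.mk (Sum.elim (fun v => (p.2 v : Fin k)) p.1.1) (by
      rintro (u | i) (v | j) hadj <;>
        simp only [hatGraph, SimpleGraph.fromRel_adj, ne_eq, Sum.inl.injEq, Sum.inr.injEq] at hadj
      · obtain ⟨hne, hGa⟩ := hadj
        have hGadj : G.Adj u v := by rcases hGa with h | h; exact h; exact h.symm
        exact fun h => p.2.valid hGadj (Subtype.ext h)
      · obtain ⟨-, hor⟩ := hadj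
        rcases hor with (rfl | rfl) | h
        · exact (p.2 u).2.1
        · exact (p.2 u).2.2
        · exact h.elim
      · obtain ⟨-, hor⟩ := hadj
        rcases hor with h | (rfl | rfl)
        · exact h.elim
        · exact fun hh => (p.2 v).2.1 hh.symm
        · exact fun hh => (p.2 v).2.2 hh.symm
      · obtain ⟨hne, hor⟩ := hadj
        obtain ⟨h1, h2, h3⟩ := p.1.2
        rcases hor with (⟨rfl, rfl⟩ | ⟨rfl, rfl⟩ | ⟨rfl, rfl⟩) | (⟨rfl, rfl⟩ | ⟨rfl, rfl⟩ | ⟨rfl, rfl⟩)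
        · exact h1
        · exact h2
        · exact h3
        · exact h1.symm
        · exact h2.symm
        · exact h3.symm)
  left_inv c := by
    ext (v | i) <;> rfl
  right_inv p := by
    rcases p with ⟨⟨f, hf⟩, g⟩
    rfl

lemma numColorings_card (G : SimpleGraph V) [Fintype V] (α : Type*) [Fintype α] :
    Nat.card (G.Coloring α) = numColorings G (Fintype.card α) :=
  Nat.card_congr (G.recolorOfEquiv (Fintype.equivFin α))

lemma key_sum (G : SimpleGraph V) [Fintype V] (k : ℕ) :
    numColorings (hatGraph G) k =
      ∑ f : {f : Fin 4 → Fin k // f 0 ≠ f 1 ∧ f 1 ≠ f 2 ∧ f 2 ≠ f 3},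
        numColorings G (Fintype.card {x : Fin k // x ≠ f.1 0 ∧ x ≠ f.1 3}) := by
  rw [numColorings, Nat.card_congr (hatEquiv G k), Nat.card_eq_fintype_card,
    Fintype.card_sigma]
  exact Finset.sum_congr rfl fun f _ => by
    rw [← Nat.card_eq_fintype_card, numColorings_card]

end aux

/-- If `G` and `H` have the same number of proper `k`-colorings for every `k`, then so do
`Ĝ` and `Ĥ`. -/
theorem stmt_4 {V W : Type*} [Fintype V] [Fintype W]
    (G : SimpleGraph V) (H : SimpleGraph W)
    (h : ∀ k : ℕ, numColorings G k = numColorings H k) :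
    ∀ k : ℕ, numColorings (hatGraph G) k = numColorings (hatGraph H) k := by
  intro k
  rw [key_sum G k, key_sum H k]
  exact Finset.sum_congr rfl fun f _ => h _
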